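/- The Gosset lattice E₈, generated by the given upper triangular 8×8 matrix with diagonal (2,1,1,1,1,1,1,1/2), satisfies ψ_{E₈}(x) < ψ_Λ(x) for all x > 0, where Λ is the orthogonal lattice generated by diag(2,1,1,1,1,1,1,1/2). -/

import Mathlib

/-!
For an upper triangular generator `M`, the first coordinate `m` of `ω` enters only the first
entry `M₀₀ m + c` of `M ω`, where the shift `c` depends on the other coordinates. Summing over `m`
first splits `ψ_M(x)` into one-dimensional theta series `∑ₘ exp(-x (M₀₀ m + c)²)`, weighted by
the terms of `ψ` of the lower right block. By Poisson summation such a series is a positive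
multiple of `∑ₙ exp(-π² n² / (x M₀₀²)) cos(2π n c / M₀₀)`, so it is largest at `c = 0`, strictly
so unless `c / M₀₀ ∈ ℤ`. Induction on the dimension gives `ψ_M ≤ ψ_{diag M}`. For `E₈`, the fibre
through the generator `(1/2, …, 1/2)` has shift `c = 1/2` against `M₀₀ = 2`, which makes the
inequality strict.
-/

open scoped BigOperators

/-- The psi function `ψ_Λ(x) = ∑_{t ∈ Λ} exp(−x‖t‖²)` of the lattice generated by `M`. -/
noncomputable def psi {n : ℕ} (M : Matrix (Fin n) (Fin n) ℝ) (x : ℝ) : ℝ :=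
  ∑' ω : Fin n → ℤ, Real.exp (-x * ∑ i, (M.mulVec (fun j => (ω j : ℝ)) i) ^ 2)

/-- The upper triangular generator matrix of the Gosset lattice `E₈`. -/
noncomputable def E8gen : Matrix (Fin 8) (Fin 8) ℝ :=
  !![2, -1,  0,  0,  0,  0,  0, 1/2;
     0,  1, -1,  0,  0,  0,  0, 1/2;
     0,  0,  1, -1,  0,  0,  0, 1/2;
     0,  0,  0,  1, -1,  0,  0, 1/2;
     0,  0,  0,  0,  1, -1,  0, 1/2;
     0,  0,  0,  0,  0,  1, -1, 1/2;
     0,  0,  0,  0,  0,  0,  1, 1/2;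
     0,  0,  0,  0,  0,  0,  0, 1/2]

open Real Matrix

section GaussianSums

variable {x : ℝ}

lemma summable_exp_neg_mul_int_add_sq (hx : 0 < x) (c : ℝ) :
    Summable fun n : ℤ => exp (-x * (n + c) ^ 2) := by
  refine (HurwitzKernelBounds.summable_f_int 0 c (div_pos hx pi_pos)).congr fun n => ?_
  simp only [HurwitzKernelBounds.f_int, pow_zero, one_mul]
  congr 1
  field_simp

lemma tsum_exp_neg_mul_int_add_sq (hx : 0 < x) (c : ℝ) :
    ∑' n : ℤ, exp (-x * (n + c) ^ 2) =
      √(π / x) * ∑' n : ℤ, exp (-(π ^ 2 / x) * n ^ 2) * cos (2 * π * c * n) := by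
  have hx' : (x : ℂ) ≠ 0 := Complex.ofReal_ne_zero.2 hx.ne'
  have key := Complex.tsum_exp_neg_quadratic (a := ((x / π : ℝ) : ℂ))
    (by simpa using div_pos hx pi_pos) ((-(x * c) / π : ℝ) : ℂ)
  -- both sides of the transformation formula carry the factor `exp (x c²)`
  have hL : ∀ n : ℤ,
      Complex.exp (-π * ((x / π : ℝ) : ℂ) * n ^ 2 + 2 * π * ((-(x * c) / π : ℝ) : ℂ) * n) =
        Complex.exp (x * c ^ 2) * (exp (-x * (n + c) ^ 2) : ℝ) := by
    intro n
    push_cast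
    rw [← Complex.exp_add]
    congr 1
    field_simp
    ring
  have hR : ∀ n : ℤ,
      Complex.exp (-π / ((x / π : ℝ) : ℂ) * (n + Complex.I * ((-(x * c) / π : ℝ) : ℂ)) ^ 2) =
        Complex.exp (x * c ^ 2) *
          ((exp (-(π ^ 2 / x) * n ^ 2) : ℝ) * Complex.exp ((2 * π * c * n : ℝ) * Complex.I)) := by
    intro n
    push_cast
    rw [← Complex.exp_add, ← Complex.exp_add]
    congr 1
    field_simp
    ring_nf
    rw [Complex.I_sq]
    ring
  have hpow : ((x / π : ℝ) : ℂ) ^ (1 / 2 : ℂ) = (√(x / π) : ℝ) := by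
    rw [show (1 / 2 : ℂ) = ((1 / 2 : ℝ) : ℂ) by norm_num,
      ← Complex.ofReal_cpow (div_pos hx pi_pos).le, sqrt_eq_rpow]
  have hS : Summable fun n : ℤ =>
      ((exp (-(π ^ 2 / x) * n ^ 2) : ℝ) : ℂ) * Complex.exp ((2 * π * c * n : ℝ) * Complex.I) := by
    refine Summable.of_norm ?_
    simp only [norm_mul, Complex.norm_exp_ofReal_mul_I, mul_one, Complex.norm_real, norm_eq_abs,
      abs_exp]
    simpa using summable_exp_neg_mul_int_add_sq (x := π ^ 2 / x) (by positivity) 0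
  simp only [hL, hR, tsum_mul_left, hpow] at key
  have hre := congrArg Complex.re
    (mul_left_cancel₀ (Complex.exp_ne_zero _) (key.trans (mul_left_comm _ _ _)))
  rw [← Complex.ofReal_tsum, Complex.ofReal_re, one_div, ← Complex.ofReal_inv,
    Complex.re_ofReal_mul, Complex.re_tsum hS] at hre
  simp only [Complex.re_ofReal_mul, Complex.exp_ofReal_mul_I_re] at hre
  rw [hre, ← sqrt_inv, inv_div]

lemma tsum_exp_neg_mul_int_sq_eq_sqrt_mul (hx : 0 < x) :
    ∑' n : ℤ, exp (-x * (n : ℝ) ^ 2) = √(π / x) * ∑' n : ℤ, exp (-(π ^ 2 / x) * n ^ 2) := by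
  simpa using tsum_exp_neg_mul_int_add_sq hx 0

lemma summable_exp_neg_mul_int_sq_mul_cos (hx : 0 < x) (c : ℝ) :
    Summable fun n : ℤ => exp (-x * n ^ 2) * cos (2 * π * c * n) := by
  refine (by simpa using summable_exp_neg_mul_int_add_sq hx 0 :
    Summable fun n : ℤ => exp (-x * n ^ 2)).of_norm_bounded fun n => ?_
  rw [norm_mul, norm_of_nonneg (exp_pos _).le]
  exact mul_le_of_le_one_right (exp_pos _).le (abs_cos_le_one _)

lemma tsum_exp_neg_mul_int_add_sq_le (hx : 0 < x) (c : ℝ) :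
    ∑' n : ℤ, exp (-x * (n + c) ^ 2) ≤ ∑' n : ℤ, exp (-x * (n : ℝ) ^ 2) := by
  rw [tsum_exp_neg_mul_int_add_sq hx c, tsum_exp_neg_mul_int_sq_eq_sqrt_mul hx]
  refine mul_le_mul_of_nonneg_left ?_ (sqrt_nonneg _)
  exact (summable_exp_neg_mul_int_sq_mul_cos (by positivity) c).tsum_mono
    (by simpa using summable_exp_neg_mul_int_add_sq (x := π ^ 2 / x) (by positivity) 0)
    fun n => mul_le_of_le_one_right (exp_pos _).le (cos_le_one _)

lemma tsum_exp_neg_mul_int_add_sq_lt (hx : 0 < x) {c : ℝ} (hc : ∀ m : ℤ, (m : ℝ) + c ≠ 0) :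
    ∑' n : ℤ, exp (-x * (n + c) ^ 2) < ∑' n : ℤ, exp (-x * (n : ℝ) ^ 2) := by
  have hcos : cos (2 * π * c) < 1 := by
    refine (cos_le_one _).lt_of_ne fun h => ?_
    obtain ⟨m, hm⟩ := (cos_eq_one_iff _).1 h
    exact hc (-m) (by push_cast; nlinarith [pi_pos])
  rw [tsum_exp_neg_mul_int_add_sq hx c, tsum_exp_neg_mul_int_sq_eq_sqrt_mul hx]
  refine mul_lt_mul_of_pos_left ?_ (sqrt_pos.2 (div_pos pi_pos hx))
  exact (summable_exp_neg_mul_int_sq_mul_cos (by positivity) c).tsum_lt_tsum (i := 1)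
    (fun n => mul_le_of_le_one_right (exp_pos _).le (cos_le_one _))
    (mul_lt_of_lt_one_right (exp_pos _) (by simpa using hcos))
    (by simpa using summable_exp_neg_mul_int_add_sq (x := π ^ 2 / x) (by positivity) 0)

variable {d : ℝ}

lemma exp_neg_mul_mul_add_sq (hd : d ≠ 0) (c m : ℝ) :
    exp (-x * (d * m + c) ^ 2) = exp (-(x * d ^ 2) * (m + c / d) ^ 2) := by
  congr 1
  field_simp

lemma exp_neg_mul_mul_sq (m : ℝ) : exp (-x * (d * m) ^ 2) = exp (-(x * d ^ 2) * m ^ 2) := by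
  ring_nf

lemma summable_exp_neg_mul_mul_int_add_sq (hx : 0 < x) (hd : d ≠ 0) (c : ℝ) :
    Summable fun m : ℤ => exp (-x * (d * m + c) ^ 2) := by
  simpa only [exp_neg_mul_mul_add_sq hd] using
    summable_exp_neg_mul_int_add_sq (x := x * d ^ 2) (by positivity) (c / d)

lemma tsum_exp_neg_mul_mul_int_add_sq_le (hx : 0 < x) (hd : d ≠ 0) (c : ℝ) :
    ∑' m : ℤ, exp (-x * (d * m + c) ^ 2) ≤ ∑' m : ℤ, exp (-x * (d * m) ^ 2) := by
  simpa only [exp_neg_mul_mul_add_sq hd, exp_neg_mul_mul_sq] using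
    tsum_exp_neg_mul_int_add_sq_le (x := x * d ^ 2) (by positivity) (c / d)

lemma tsum_exp_neg_mul_mul_int_add_sq_lt (hx : 0 < x) (hd : d ≠ 0) {c : ℝ}
    (hc : ∀ m : ℤ, d * m + c ≠ 0) :
    ∑' m : ℤ, exp (-x * (d * m + c) ^ 2) < ∑' m : ℤ, exp (-x * (d * m) ^ 2) := by
  simpa only [exp_neg_mul_mul_add_sq hd, exp_neg_mul_mul_sq] using
    tsum_exp_neg_mul_int_add_sq_lt (x := x * d ^ 2) (by positivity) (c := c / d)
      fun m h => hc m (by field_simp at h; linarith)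

end GaussianSums

noncomputable def normSqMulVec {n : ℕ} (M : Matrix (Fin n) (Fin n) ℝ) (ω : Fin n → ℤ) : ℝ :=
  ∑ i, (M *ᵥ fun j => (ω j : ℝ)) i ^ 2

lemma psi_eq_tsum {n : ℕ} (M : Matrix (Fin n) (Fin n) ℝ) (x : ℝ) :
    psi M x = ∑' ω, exp (-x * normSqMulVec M ω) := rfl

/-- The part of `ψ_M(x)` coming from the lattice points whose last `n` coordinates are `ω`. -/
noncomputable def psiFiber {n : ℕ} (M : Matrix (Fin (n + 1)) (Fin (n + 1)) ℝ) (x : ℝ)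
    (ω : Fin n → ℤ) : ℝ :=
  exp (-x * normSqMulVec (M.submatrix Fin.succ Fin.succ) ω) *
    ∑' m : ℤ, exp (-x * (M 0 0 * m + ∑ j, M 0 j.succ * ω j) ^ 2)

section SplitFirstCoordinate

variable {n : ℕ} {M : Matrix (Fin (n + 1)) (Fin (n + 1)) ℝ} {x : ℝ}

lemma normSqMulVec_cons (hM : ∀ i : Fin n, M i.succ 0 = 0) (m : ℤ) (ω : Fin n → ℤ) :
    normSqMulVec M (Fin.cons m ω) = (M 0 0 * m + ∑ j, M 0 j.succ * ω j) ^ 2 +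
      normSqMulVec (M.submatrix Fin.succ Fin.succ) ω := by
  simp [normSqMulVec, mulVec, dotProduct, Fin.sum_univ_succ, hM]

variable (hM : ∀ i : Fin n, M i.succ 0 = 0) (hd : M 0 0 ≠ 0) (hx : 0 < x)
  (h : Summable fun ω => exp (-x * normSqMulVec (M.submatrix Fin.succ Fin.succ) ω))
include hd hx h

lemma summable_psiFiber : Summable (psiFiber M x) :=
  (h.mul_right _).of_nonneg_of_le (fun ω => by unfold psiFiber; positivity) fun ω =>
    mul_le_mul_of_nonneg_left (tsum_exp_neg_mul_mul_int_add_sq_le hx hd _) (exp_pos _).le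

include hM

lemma hasSum_exp_neg_mul_normSqMulVec :
    HasSum (fun ω => exp (-x * normSqMulVec M ω)) (∑' ω, psiFiber M x ω) := by
  let e : (Fin n → ℤ) × ℤ ≃ (Fin (n + 1) → ℤ) :=
    (Equiv.prodComm _ _).trans (Fin.consEquiv fun _ => ℤ)
  have he : ∀ p, exp (-x * normSqMulVec M (e p)) =
      exp (-x * normSqMulVec (M.submatrix Fin.succ Fin.succ) p.1) *
        exp (-x * (M 0 0 * p.2 + ∑ j, M 0 j.succ * p.1 j) ^ 2) := by
    rintro ⟨ω, m⟩
    change exp (-x * normSqMulVec M (Fin.cons m ω)) = _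
    rw [normSqMulVec_cons hM, ← exp_add, ← mul_add, add_comm]
  have hrow : ∀ ω, Summable fun m => exp (-x * normSqMulVec M (e (ω, m))) := fun ω => by
    simpa only [he] using (summable_exp_neg_mul_mul_int_add_sq hx hd _).mul_left _
  have hsum : Summable fun p => exp (-x * normSqMulVec M (e p)) :=
    (summable_prod_of_nonneg fun p => (exp_pos _).le).2
      ⟨hrow, by simp only [he, tsum_mul_left]; exact summable_psiFiber hd hx h⟩
  refine e.hasSum_iff.1 ?_
  have hprod := hsum.hasSum
  rw [hsum.tsum_prod' hrow] at hprod
  simpa only [Function.comp_def, he, tsum_mul_left, psiFiber] using hprod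

lemma psi_le_mul_psi_submatrix :
    psi M x ≤ (∑' m : ℤ, exp (-x * (M 0 0 * m) ^ 2)) * psi (M.submatrix Fin.succ Fin.succ) x := by
  rw [psi_eq_tsum, (hasSum_exp_neg_mul_normSqMulVec hM hd hx h).tsum_eq, psi_eq_tsum,
    ← tsum_mul_left]
  refine (summable_psiFiber hd hx h).tsum_mono (h.mul_left _) fun ω => ?_
  rw [mul_comm (tsum _)]
  exact mul_le_mul_of_nonneg_left (tsum_exp_neg_mul_mul_int_add_sq_le hx hd _) (exp_pos _).le

lemma psi_lt_mul_psi_submatrix (ω₀ : Fin n → ℤ)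
    (hω₀ : ∀ m : ℤ, M 0 0 * m + ∑ j, M 0 j.succ * ω₀ j ≠ 0) :
    psi M x < (∑' m : ℤ, exp (-x * (M 0 0 * m) ^ 2)) * psi (M.submatrix Fin.succ Fin.succ) x := by
  rw [psi_eq_tsum, (hasSum_exp_neg_mul_normSqMulVec hM hd hx h).tsum_eq, psi_eq_tsum,
    ← tsum_mul_left]
  refine (summable_psiFiber hd hx h).tsum_lt_tsum (i := ω₀) (fun ω => ?_) ?_ (h.mul_left _)
  · rw [mul_comm (tsum _)]
    exact mul_le_mul_of_nonneg_left (tsum_exp_neg_mul_mul_int_add_sq_le hx hd _) (exp_pos _).le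
  · rw [mul_comm (tsum _)]
    exact mul_lt_mul_of_pos_left (tsum_exp_neg_mul_mul_int_add_sq_lt hx hd hω₀) (exp_pos _)

end SplitFirstCoordinate

lemma Matrix.IsUpperTriangular.submatrix_succ {R : Type*} [Zero R] {n : ℕ}
    {M : Matrix (Fin (n + 1)) (Fin (n + 1)) R} (hM : M.IsUpperTriangular) : (M.submatrix Fin.succ Fin.succ).IsUpperTriangular :=
  fun _ _ h => hM (Fin.succ_lt_succ_iff.2 h)

section UpperTriangular

variable {x : ℝ}

theorem summable_exp_neg_mul_normSqMulVec {n : ℕ} {M : Matrix (Fin n) (Fin n) ℝ}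
    (hM : M.IsUpperTriangular) (hd : ∀ i, M i i ≠ 0) (hx : 0 < x) :
    Summable fun ω => exp (-x * normSqMulVec M ω) := by
  induction n with
  | zero => exact Summable.of_finite
  | succ n ih =>
    exact (hasSum_exp_neg_mul_normSqMulVec (fun i => hM (Fin.succ_pos i)) (hd 0) hx
      (ih hM.submatrix_succ fun i => hd i.succ)).summable

lemma psi_diagonal_succ {n : ℕ} {d : Fin (n + 1) → ℝ} (hd : ∀ i, d i ≠ 0) (hx : 0 < x) :
    psi (diagonal d) x =
      (∑' m : ℤ, exp (-x * (d 0 * m) ^ 2)) * psi (diagonal (d ∘ Fin.succ)) x := by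
  have hrow : ∀ j : Fin n, diagonal d 0 j.succ = 0 :=
    fun j => diagonal_apply_ne _ (Fin.succ_ne_zero j).symm
  have hsub : (diagonal d).submatrix Fin.succ Fin.succ = diagonal (d ∘ Fin.succ) :=
    submatrix_diagonal _ _ (Fin.succ_injective _)
  have hsum := hasSum_exp_neg_mul_normSqMulVec (fun i => diagonal_apply_ne _ i.succ_ne_zero)
    (by simpa using hd 0) hx (hsub ▸ summable_exp_neg_mul_normSqMulVec
      (blockTriangular_diagonal _) (fun i => by simpa using hd i.succ) hx)
  rw [psi_eq_tsum, hsum.tsum_eq, psi_eq_tsum, mul_comm, ← tsum_mul_right]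
  simp only [psiFiber, hrow, hsub, diagonal_apply_eq, zero_mul, Finset.sum_const_zero, add_zero]

theorem psi_le_psi_diagonal {n : ℕ} {M : Matrix (Fin n) (Fin n) ℝ}
    (hM : M.IsUpperTriangular) (hd : ∀ i, M i i ≠ 0) (hx : 0 < x) :
    psi M x ≤ psi (diagonal fun i => M i i) x := by
  induction n with
  | zero => exact le_of_eq (by simp [psi])
  | succ n ih =>
    calc psi M x
        ≤ (∑' m : ℤ, exp (-x * (M 0 0 * m) ^ 2)) * psi (M.submatrix Fin.succ Fin.succ) x :=
          psi_le_mul_psi_submatrix (fun i => hM (Fin.succ_pos i)) (hd 0) hx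
            (summable_exp_neg_mul_normSqMulVec hM.submatrix_succ (fun i => hd i.succ) hx)
      _ ≤ (∑' m : ℤ, exp (-x * (M 0 0 * m) ^ 2)) * psi (diagonal fun i => M i.succ i.succ) x :=
          mul_le_mul_of_nonneg_left (ih hM.submatrix_succ fun i => hd i.succ)
            (tsum_nonneg fun _ => (exp_pos _).le)
      _ = psi (diagonal fun i => M i i) x := (psi_diagonal_succ hd hx).symm

theorem psi_lt_psi_diagonal {n : ℕ} {M : Matrix (Fin (n + 1)) (Fin (n + 1)) ℝ}
    (hM : M.IsUpperTriangular) (hd : ∀ i, M i i ≠ 0) (hx : 0 < x)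
    (ω₀ : Fin n → ℤ) (hω₀ : ∀ m : ℤ, M 0 0 * m + ∑ j, M 0 j.succ * ω₀ j ≠ 0) :
    psi M x < psi (diagonal fun i => M i i) x :=
  calc psi M x
      < (∑' m : ℤ, exp (-x * (M 0 0 * m) ^ 2)) * psi (M.submatrix Fin.succ Fin.succ) x :=
        psi_lt_mul_psi_submatrix (fun i => hM (Fin.succ_pos i)) (hd 0) hx
          (summable_exp_neg_mul_normSqMulVec hM.submatrix_succ (fun i => hd i.succ) hx) ω₀ hω₀
    _ ≤ (∑' m : ℤ, exp (-x * (M 0 0 * m) ^ 2)) * psi (diagonal fun i => M i.succ i.succ) x :=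
        mul_le_mul_of_nonneg_left (psi_le_psi_diagonal hM.submatrix_succ (fun i => hd i.succ) hx)
          (tsum_nonneg fun _ => (exp_pos _).le)
    _ = psi (diagonal fun i => M i i) x := (psi_diagonal_succ hd hx).symm

end UpperTriangular

lemma E8gen_isUpperTriangular : E8gen.IsUpperTriangular := by
  intro i j h
  fin_cases i <;> fin_cases j <;> first | rfl | simp at h

lemma E8gen_diag : (fun i => E8gen i i) = ![2, 1, 1, 1, 1, 1, 1, 1/2] := by
  ext i
  fin_cases i <;> rfl

lemma E8gen_diag_ne_zero (i : Fin 8) : E8gen i i ≠ 0 := by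
  rw [congrFun E8gen_diag i]
  fin_cases i <;> norm_num

lemma E8gen_first_coord_ne_zero (m : ℤ) :
    E8gen 0 0 * m + ∑ j, E8gen 0 j.succ * (Pi.single 6 1 : Fin 7 → ℤ) j ≠ 0 := by
  have hshift : ∑ j, E8gen 0 j.succ * (Pi.single 6 1 : Fin 7 → ℤ) j = 1 / 2 := by
    simp [E8gen, Pi.single_apply]
  rw [hshift, show E8gen 0 0 = 2 from rfl]
  intro h
  have h4 : ((4 * m + 1 : ℤ) : ℝ) = 0 := by push_cast; linarith
  exact absurd (Int.cast_eq_zero.1 h4) (by omega)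

/-- The Gosset lattice `E₈`, a skewing of the orthogonal lattice generated by
`diag(2,1,1,1,1,1,1,1/2)`, has a strictly smaller psi function. -/
theorem psi_E8_lt_orthogonal (x : ℝ) (hx : 0 < x) :
    psi E8gen x < psi (Matrix.diagonal ![2, 1, 1, 1, 1, 1, 1, 1/2]) x := by
  rw [← E8gen_diag]
  exact psi_lt_psi_diagonal E8gen_isUpperTriangular E8gen_diag_ne_zero hx _
    E8gen_first_coord_ne_zero
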